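/- The functions Q_1 and Q_2 defined by quotients of integrals over the unit disc satisfy Q_2(λ) = 1 − Q_1(1/λ) for all λ ∈ (0,∞), where Q_1(λ) = 3·(∬_{D} s²t²/(s²+λ²t²)^{3/2} ds dt)/(∬_{D} s²/(s²+λ²t²)^{3/2} ds dt) and Q_2(λ) = 3·(∬_{D} t⁴/(s²+λ²t²)^{3/2} ds dt)/(∬_{D} t²/(s²+λ²t²)^{3/2} ds dt), D being the closed unit disc {(s,t) : s²+t² ≤ 1}. -/

import Mathlib

open MeasureTheory

/-- The closed unit disc in ℝ². -/
def unitDisc : Set (ℝ × ℝ) := {q : ℝ × ℝ | q.1 ^ 2 + q.2 ^ 2 ≤ 1}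

/-- Coefficient function Q₁ arising in the PDE approximated by L¹ median filtering. -/
noncomputable def Q₁ (l : ℝ) : ℝ :=
  3 * (∫ p in unitDisc, p.1 ^ 2 * p.2 ^ 2 / (p.1 ^ 2 + l ^ 2 * p.2 ^ 2) ^ ((3 : ℝ) / 2)) /
    (∫ p in unitDisc, p.1 ^ 2 / (p.1 ^ 2 + l ^ 2 * p.2 ^ 2) ^ ((3 : ℝ) / 2))

/-- Coefficient function Q₂ arising in the PDE approximated by L¹ median filtering. -/
noncomputable def Q₂ (l : ℝ) : ℝ :=
  3 * (∫ p in unitDisc, p.2 ^ 4 / (p.1 ^ 2 + l ^ 2 * p.2 ^ 2) ^ ((3 : ℝ) / 2)) /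
    (∫ p in unitDisc, p.2 ^ 2 / (p.1 ^ 2 + l ^ 2 * p.2 ^ 2) ^ ((3 : ℝ) / 2))

/-!
Substituting `λ ↦ 1/λ` and exchanging `s ↔ t` turns `Q₁(1/λ)` into `3 ∫_D s² g / ∫_D g`, while
`Q₂(λ) = 3 ∫_D t² g / ∫_D g`, where `g = t² / (s² + λ² t²)^(3/2)`. As `g` is homogeneous of
degree `-1`, polar coordinates give `∫_D (s² + t²) g = (1/3) ∫_D g`, which is the identity.
-/

open Real Set

lemma measurableSet_unitDisc : MeasurableSet unitDisc :=
  (isClosed_le (by fun_prop) continuous_const).measurableSet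

lemma mul_cos_mul_sin_mem_unitDisc_iff {r : ℝ} (hr : 0 ≤ r) (θ : ℝ) :
    (r * cos θ, r * sin θ) ∈ unitDisc ↔ r ≤ 1 := by
  have h : (r * cos θ) ^ 2 + (r * sin θ) ^ 2 = r ^ 2 := by
    linear_combination r ^ 2 * sin_sq_add_cos_sq θ
  simp only [unitDisc, mem_ofPred_eq, h, sq_le_one_iff₀ hr]

/-- `hh` says that `h` is homogeneous of degree `n - 1`; it is stated with the polar Jacobian `r`
so that degree `-1` is the case `n = 0`. -/
theorem integral_unitDisc_eq_of_polar_homogeneous (h : ℝ × ℝ → ℝ) (n : ℕ)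
    (hh : ∀ r > 0, ∀ θ, r * h (r * cos θ, r * sin θ) = r ^ n * h (cos θ, sin θ)) :
    ∫ p in unitDisc, h p = ((n : ℝ) + 1)⁻¹ * ∫ θ in -π..π, h (cos θ, sin θ) := by
  have hpolar : ∀ p ∈ polarCoord.target, p.1 • unitDisc.indicator h (polarCoord.symm p)
      = (Ioc 0 1).indicator (· ^ n) p.1 * h (cos p.2, sin p.2) := by
    rintro ⟨r, θ⟩ hrθ
    have hr : 0 < r := hrθ.1
    have hmem := mul_cos_mul_sin_mem_unitDisc_iff hr.le θ
    simp only [polarCoord_symm_apply, smul_eq_mul]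
    by_cases hr1 : r ≤ 1
    · rw [indicator_of_mem (hmem.2 hr1), indicator_of_mem (mem_Ioc.2 ⟨hr, hr1⟩), hh r hr θ]
    · rw [indicator_of_notMem (mt hmem.1 hr1), indicator_of_notMem (fun h ↦ hr1 h.2),
        mul_zero, zero_mul]
  calc ∫ p in unitDisc, h p
      = ∫ p in polarCoord.target, p.1 • unitDisc.indicator h (polarCoord.symm p) := by
        rw [integral_comp_polarCoord_symm, integral_indicator measurableSet_unitDisc]
    _ = ∫ p in Ioi 0 ×ˢ Ioo (-π) π, (Ioc 0 1).indicator (· ^ n) p.1 * h (cos p.2, sin p.2) :=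
        setIntegral_congr_fun polarCoord.open_target.measurableSet hpolar
    _ = _ := by
      rw [Measure.volume_eq_prod, setIntegral_prod_mul (fun r ↦ (Ioc 0 1).indicator (· ^ n) r)
          (fun θ ↦ h (cos θ, sin θ)), setIntegral_indicator measurableSet_Ioc,
        inter_eq_right.2 Ioc_subset_Ioi_self, ← intervalIntegral.integral_of_le zero_le_one,
        integral_pow, intervalIntegral.integral_of_le (by linarith [pi_pos]),
        integral_Ioc_eq_integral_Ioo]
      simp

theorem integral_unitDisc_sq_add_sq_mul (g : ℝ × ℝ → ℝ)
    (hg : ∀ r > 0, ∀ θ, r * g (r * cos θ, r * sin θ) = g (cos θ, sin θ))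
    (hcont : Continuous fun θ ↦ g (cos θ, sin θ)) :
    3 * ((∫ p in unitDisc, p.1 ^ 2 * g p) + ∫ p in unitDisc, p.2 ^ 2 * g p)
      = ∫ p in unitDisc, g p := by
  rw [integral_unitDisc_eq_of_polar_homogeneous _ 2 fun r hr θ ↦ by rw [← hg r hr θ]; ring,
    integral_unitDisc_eq_of_polar_homogeneous _ 2 fun r hr θ ↦ by rw [← hg r hr θ]; ring,
    integral_unitDisc_eq_of_polar_homogeneous g 0 fun r hr θ ↦ by rw [pow_zero, one_mul, hg r hr θ]]
  dsimp only
  have hcos : Continuous fun θ ↦ cos θ ^ 2 * g (cos θ, sin θ) := (continuous_cos.pow 2).mul hcont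
  have hsin : Continuous fun θ ↦ sin θ ^ 2 * g (cos θ, sin θ) := (continuous_sin.pow 2).mul hcont
  rw [← mul_add, ← intervalIntegral.integral_add (hcos.intervalIntegrable _ _)
    (hsin.intervalIntegrable _ _)]
  simp only [← add_mul, cos_sq_add_sin_sq, one_mul]
  push_cast
  ring

lemma integral_sin_sq_div_pos {G : ℝ → ℝ} (hG : Continuous G) (hpos : ∀ θ, 0 < G θ) :
    0 < ∫ θ in -π..π, sin θ ^ 2 / G θ := by
  have hcont : Continuous fun θ ↦ sin θ ^ 2 / G θ :=
    (continuous_sin.pow 2).div hG fun θ ↦ (hpos θ).ne'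
  rw [← intervalIntegral.integral_add_adjacent_intervals (b := 0) (hcont.intervalIntegrable _ _)
    (hcont.intervalIntegrable _ _)]
  refine add_pos_of_nonneg_of_pos ?_ ?_
  · exact intervalIntegral.integral_nonneg (by linarith [pi_pos])
      fun θ _ ↦ div_nonneg (sq_nonneg _) (hpos θ).le
  · exact intervalIntegral.intervalIntegral_pos_of_pos_on (hcont.intervalIntegrable _ _)
      (fun θ hθ ↦ div_pos (pow_pos (sin_pos_of_pos_of_lt_pi hθ.1 hθ.2) 2) (hpos θ)) pi_pos

theorem integral_unitDisc_comp_swap (f : ℝ × ℝ → ℝ) :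
    ∫ p in unitDisc, f p.swap = ∫ p in unitDisc, f p := by
  have hswap : MeasurePreserving (Prod.swap : ℝ × ℝ → ℝ × ℝ) := by
    rw [Measure.volume_eq_prod]
    exact Measure.measurePreserving_swap
  have hpre : Prod.swap ⁻¹' unitDisc = unitDisc := by
    ext p
    simp only [unitDisc, mem_preimage, mem_ofPred_eq, Prod.fst_swap, Prod.snd_swap, add_comm]
  rw [← hswap.setIntegral_preimage_emb MeasurableEquiv.prodComm.measurableEmbedding, hpre]
  simp only [Prod.swap_swap]

lemma sq_mul_rpow_three_halves {a x : ℝ} (ha : 0 ≤ a) (hx : 0 ≤ x) :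
    (a ^ 2 * x) ^ ((3 : ℝ) / 2) = a ^ 3 * x ^ ((3 : ℝ) / 2) := by
  rw [mul_rpow (sq_nonneg a) hx, ← rpow_natCast a 2, ← rpow_mul ha]
  norm_num

lemma cos_sq_add_mul_sin_sq_pos {l : ℝ} (hl : l ≠ 0) (θ : ℝ) :
    0 < cos θ ^ 2 + l ^ 2 * sin θ ^ 2 := by
  rcases eq_or_ne (sin θ) 0 with h | h
  · nlinarith [sin_sq_add_cos_sq θ]
  · positivity

theorem integral_unitDisc_div_rpow_inv {l : ℝ} (hl : 0 < l) (f : ℝ × ℝ → ℝ) :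
    ∫ p in unitDisc, f p / (p.1 ^ 2 + l⁻¹ ^ 2 * p.2 ^ 2) ^ ((3 : ℝ) / 2)
      = l ^ 3 * ∫ p in unitDisc, f p.swap / (p.1 ^ 2 + l ^ 2 * p.2 ^ 2) ^ ((3 : ℝ) / 2) := by
  rw [← integral_unitDisc_comp_swap (fun p ↦ f p.swap / (p.1 ^ 2 + l ^ 2 * p.2 ^ 2) ^ _),
    ← integral_const_mul]
  refine setIntegral_congr_fun measurableSet_unitDisc fun p _ ↦ ?_
  have hscale : p.1 ^ 2 + l⁻¹ ^ 2 * p.2 ^ 2 = l⁻¹ ^ 2 * (p.2 ^ 2 + l ^ 2 * p.1 ^ 2) := by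
    field_simp
    ring
  rw [hscale, sq_mul_rpow_three_halves (inv_nonneg.2 hl.le) (by positivity)]
  simp only [Prod.swap_swap, Prod.fst_swap, Prod.snd_swap]
  field_simp

lemma sq_div_rpow_three_halves_homogeneous (l : ℝ) {r : ℝ} (hr : 0 < r) (θ : ℝ) :
    r * ((r * sin θ) ^ 2 / ((r * cos θ) ^ 2 + l ^ 2 * (r * sin θ) ^ 2) ^ ((3 : ℝ) / 2))
      = sin θ ^ 2 / (cos θ ^ 2 + l ^ 2 * sin θ ^ 2) ^ ((3 : ℝ) / 2) := by
  have hscale : (r * cos θ) ^ 2 + l ^ 2 * (r * sin θ) ^ 2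
      = r ^ 2 * (cos θ ^ 2 + l ^ 2 * sin θ ^ 2) := by ring
  rw [hscale, sq_mul_rpow_three_halves hr.le (by positivity)]
  field_simp

/-- The identity Q₂(λ) = 1 − Q₁(1/λ) for all λ ∈ (0, ∞). -/
theorem Q₂_eq_one_sub_Q₁_inv (l : ℝ) (hl : 0 < l) : Q₂ l = 1 - Q₁ l⁻¹ := by
  set g : ℝ × ℝ → ℝ := fun p ↦ p.2 ^ 2 / (p.1 ^ 2 + l ^ 2 * p.2 ^ 2) ^ ((3 : ℝ) / 2) with hg
  have hρ : Continuous fun θ ↦ (cos θ ^ 2 + l ^ 2 * sin θ ^ 2) ^ ((3 : ℝ) / 2) :=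
    (by fun_prop : Continuous fun θ ↦ cos θ ^ 2 + l ^ 2 * sin θ ^ 2).rpow_const
      fun _ ↦ Or.inr (by norm_num)
  have hρ_pos θ : 0 < (cos θ ^ 2 + l ^ 2 * sin θ ^ 2) ^ ((3 : ℝ) / 2) :=
    rpow_pos_of_pos (cos_sq_add_mul_sin_sq_pos hl.ne' θ) _
  have hhom : ∀ r > 0, ∀ θ, r * g (r * cos θ, r * sin θ) = g (cos θ, sin θ) :=
    fun r hr θ ↦ sq_div_rpow_three_halves_homogeneous l hr θ
  have hsplit := integral_unitDisc_sq_add_sq_mul g hhom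
    ((continuous_sin.pow 2).div hρ fun θ ↦ (hρ_pos θ).ne')
  have hpos : 0 < ∫ p in unitDisc, g p := by
    rw [integral_unitDisc_eq_of_polar_homogeneous g 0 (by simpa using hhom)]
    simpa using integral_sin_sq_div_pos hρ hρ_pos
  have hQ₁ : Q₁ l⁻¹ = 3 * (∫ p in unitDisc, p.1 ^ 2 * g p) / ∫ p in unitDisc, g p := by
    rw [Q₁, integral_unitDisc_div_rpow_inv hl, integral_unitDisc_div_rpow_inv hl, mul_left_comm,
      mul_div_mul_left _ _ (by positivity)]
    simp only [Prod.fst_swap, Prod.snd_swap, hg, ← mul_div_assoc, mul_comm (_ ^ 2 : ℝ) (_ ^ 2)]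
  have hQ₂ : Q₂ l = 3 * (∫ p in unitDisc, p.2 ^ 2 * g p) / ∫ p in unitDisc, g p := by
    simp only [Q₂, hg, ← mul_div_assoc, ← pow_add]
  rw [hQ₁, hQ₂, eq_sub_iff_add_eq, ← add_div, ← mul_add, add_comm, hsplit, div_self hpos.ne']
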